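/- Let H be a Hopf algebra and B an algebra. If α and α⁻¹ are mutually inverse left B-module automorphisms of B ⊗ H, both commuting with id ⊗ Δ and fixing B ⊗ 1, with corresponding maps τ_α(h) = (id ⊗ ε)(α(1 ⊗ h)) and τ_{α⁻¹}(h) = (id ⊗ ε)(α⁻¹(1 ⊗ h)), then τ_α and τ_{α⁻¹} are mutual convolution inverses: Σ τ_{α⁻¹}(h₁)τ_α(h₂) = Σ τ_α(h₁)τ_{α⁻¹}(h₂) = ε(h)·1 for all h ∈ H. -/
import Mathlib

open TensorProduct

variable {k : Type*} [Field k]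
variable {H : Type*} [Ring H] [HopfAlgebra k H]
variable {B : Type*} [Ring B] [Algebra k B]

/-- Convolution product of two linear maps `H →ₗ[k] B`. -/
noncomputable def conv (f g : H →ₗ[k] B) : H →ₗ[k] B :=
  LinearMap.mul' k B ∘ₗ TensorProduct.map f g ∘ₗ Coalgebra.comul

/-- The unit of the convolution algebra: `h ↦ ε(h)·1`. -/
noncomputable def convUnit : H →ₗ[k] B :=
  Algebra.linearMap k B ∘ₗ Coalgebra.counit

/-- `τ_α(h) = (id ⊗ ε)(α(1 ⊗ h))`. -/
noncomputable def tauOf (α : B ⊗[k] H →ₗ[k] B ⊗[k] H) : H →ₗ[k] B :=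
  (TensorProduct.rid k B).toLinearMap ∘ₗ
    (TensorProduct.map LinearMap.id (Coalgebra.counit : H →ₗ[k] k)) ∘ₗ
    α ∘ₗ (TensorProduct.mk k B H 1)

/-- `α` is a left gauge transformation of the trivial bundle `B ⊗ H`. -/
def IsLeftGauge (α : B ⊗[k] H →ₗ[k] B ⊗[k] H) : Prop :=
  Function.Bijective α ∧
  (∀ (a : B) (z : B ⊗[k] H), α (a • z) = a • α z) ∧
  ((TensorProduct.map α LinearMap.id) ∘ₗ
      (TensorProduct.assoc k B H H).symm.toLinearMap ∘ₗ
      (TensorProduct.map LinearMap.id (Coalgebra.comul : H →ₗ[k] H ⊗[k] H))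
    = (TensorProduct.assoc k B H H).symm.toLinearMap ∘ₗ
      (TensorProduct.map LinearMap.id (Coalgebra.comul : H →ₗ[k] H ⊗[k] H)) ∘ₗ α) ∧
  (∀ a : B, α (a ⊗ₜ[k] (1 : H)) = a ⊗ₜ[k] (1 : H))

/-- `(id ⊗ ε)` followed by `rid`. -/
noncomputable def Fmap : B ⊗[k] H →ₗ[k] B :=
  (TensorProduct.rid k B).toLinearMap ∘ₗ
    (TensorProduct.map LinearMap.id (Coalgebra.counit : H →ₗ[k] k))

lemma Fmap_tmul (b : B) (x : H) :
    (Fmap : B ⊗[k] H →ₗ[k] B) (b ⊗ₜ x) = (Coalgebra.counit (R := k) x) • b := by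
  simp [Fmap]

lemma Fmap_smul (a : B) (z : B ⊗[k] H) : Fmap (a • z) = a * Fmap z := by
  induction z using TensorProduct.induction_on with
  | zero => simp
  | tmul b x =>
      rw [TensorProduct.smul_tmul', Fmap_tmul, Fmap_tmul, smul_eq_mul, Algebra.mul_smul_comm]
  | add z w hz hw => simp only [smul_add, map_add, hz, hw, mul_add]

lemma tauOf_apply (α : B ⊗[k] H →ₗ[k] B ⊗[k] H) (h : H) :
    tauOf α h = Fmap (α ((1 : B) ⊗ₜ h)) := rfl

lemma gauge_apply (α : B ⊗[k] H →ₗ[k] B ⊗[k] H) (hα : IsLeftGauge α) (h : H) :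
    α ((1 : B) ⊗ₜ h) =
      TensorProduct.map (tauOf α) LinearMap.id (Coalgebra.comul h) := by
  have E := LinearMap.congr_fun hα.2.2.1 ((1 : B) ⊗ₜ[k] h)
  have E' := congrArg (TensorProduct.map (Fmap : B ⊗[k] H →ₗ[k] B)
      (LinearMap.id : H →ₗ[k] H)) E
  have hRHS : ∀ z : B ⊗[k] H,
      TensorProduct.map (Fmap : B ⊗[k] H →ₗ[k] B) LinearMap.id
        ((TensorProduct.assoc k B H H).symm
          (TensorProduct.map LinearMap.id (Coalgebra.comul : H →ₗ[k] H ⊗[k] H) z)) = z := by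
    intro z
    induction z using TensorProduct.induction_on with
    | zero => rw [map_zero, LinearEquiv.map_zero, map_zero]
    | tmul b x =>
        have key : ∀ w : H ⊗[k] H,
            TensorProduct.map (Fmap : B ⊗[k] H →ₗ[k] B) LinearMap.id
              ((TensorProduct.assoc k B H H).symm (b ⊗ₜ w))
            = b ⊗ₜ (TensorProduct.lid k H)
                ((Coalgebra.counit : H →ₗ[k] k).rTensor H w) := by
          intro w
          induction w using TensorProduct.induction_on with
          | zero =>
              rw [tmul_zero, LinearEquiv.map_zero, map_zero, map_zero,
                LinearEquiv.map_zero, tmul_zero]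
          | tmul u v =>
              simp only [TensorProduct.assoc_symm_tmul, TensorProduct.map_tmul,
                Fmap_tmul, LinearMap.id_coe, id_eq, LinearMap.rTensor_tmul,
                TensorProduct.lid_tmul, TensorProduct.smul_tmul', TensorProduct.smul_tmul]
          | add w₁ w₂ h1 h2 =>
              simp only [tmul_add, map_add, LinearEquiv.map_add, h1, h2]
        simp only [TensorProduct.map_tmul, LinearMap.id_coe, id_eq]
        rw [key, Coalgebra.rTensor_counit_comul]
        simp
    | add z₁ z₂ h1 h2 =>
        simp only [map_add, LinearEquiv.map_add, h1, h2]
  have hLHS : ∀ w : H ⊗[k] H,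
      TensorProduct.map (Fmap : B ⊗[k] H →ₗ[k] B) LinearMap.id
        (TensorProduct.map α LinearMap.id
          ((TensorProduct.assoc k B H H).symm ((1 : B) ⊗ₜ w)))
      = TensorProduct.map (tauOf α) LinearMap.id w := by
    intro w
    induction w using TensorProduct.induction_on with
    | zero => rw [tmul_zero, LinearEquiv.map_zero, map_zero, map_zero, map_zero]
    | tmul u v =>
        simp only [TensorProduct.assoc_symm_tmul, TensorProduct.map_tmul,
          LinearMap.id_coe, id_eq, tauOf_apply]
    | add w₁ w₂ h1 h2 =>
        simp only [tmul_add, map_add, LinearEquiv.map_add, h1, h2]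
  simp only [LinearMap.coe_comp, Function.comp_apply, LinearEquiv.coe_coe,
    TensorProduct.map_tmul, LinearMap.id_coe, id_eq] at E'
  rw [hRHS, hLHS] at E'
  exact E'.symm

lemma conv_tau (α β : B ⊗[k] H →ₗ[k] B ⊗[k] H)
    (hα : IsLeftGauge α) (hβ : IsLeftGauge β)
    (hinv : β ∘ₗ α = LinearMap.id) :
    conv (tauOf α) (tauOf β) = (convUnit : H →ₗ[k] B) := by
  ext h
  have h1 := gauge_apply α hα h
  have h2 : (1 : B) ⊗ₜ[k] h =
      β (TensorProduct.map (tauOf α) LinearMap.id (Coalgebra.comul h)) := by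
    rw [← h1]
    exact (LinearMap.congr_fun hinv ((1 : B) ⊗ₜ[k] h)).symm
  have h3 := congrArg (Fmap : B ⊗[k] H →ₗ[k] B) h2
  have hL : (Fmap : B ⊗[k] H →ₗ[k] B) ((1 : B) ⊗ₜ[k] h) = (convUnit : H →ₗ[k] B) h := by
    have hc : convUnit (k := k) (H := H) (B := B) h = algebraMap k B (Coalgebra.counit (R := k) h) := rfl
    rw [Fmap_tmul, hc, Algebra.smul_def, mul_one]
  have hR : ∀ w : H ⊗[k] H,
      (Fmap : B ⊗[k] H →ₗ[k] B) (β (TensorProduct.map (tauOf α) LinearMap.id w))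
      = LinearMap.mul' k B (TensorProduct.map (tauOf α) (tauOf β) w) := by
    intro w
    induction w using TensorProduct.induction_on with
    | zero => simp
    | tmul u v =>
        have hs : (tauOf α u) ⊗ₜ[k] v = (tauOf α u) • ((1 : B) ⊗ₜ[k] v) := by
          rw [TensorProduct.smul_tmul', smul_eq_mul, mul_one]
        simp only [TensorProduct.map_tmul, LinearMap.id_coe, id_eq, hs,
          hβ.2.1, Fmap_smul, LinearMap.mul'_apply]
        rw [tauOf_apply β]
    | add w₁ w₂ ha hb => simp only [map_add, ha, hb]
  rw [hL, hR] at h3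
  simpa [conv] using h3.symm

theorem statement_2 (α β : B ⊗[k] H →ₗ[k] B ⊗[k] H)
    (hα : IsLeftGauge α) (hβ : IsLeftGauge β)
    (hinv₁ : β ∘ₗ α = LinearMap.id) (hinv₂ : α ∘ₗ β = LinearMap.id) :
    conv (tauOf β) (tauOf α) = (convUnit : H →ₗ[k] B) ∧
    conv (tauOf α) (tauOf β) = (convUnit : H →ₗ[k] B) := by
  exact ⟨conv_tau β α hβ hα hinv₂, conv_tau α β hα hβ hinv₁⟩
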